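/- arXiv:1902.05529 — 3 statements merged into one kernel-verified Lean document; each statement's English description precedes it below -/
import Mathlib

section
/- Let n, d ≥ 1 and let G be the OV-reduction graph built from sets A, B of n Boolean vectors of dimension d as in the Roditty–Vassilevska-Williams construction. Suppose a ∈ A and b ∈ B are vectors each having at least one coordinate equal to 1. Then the graph distance in G between the vertex of a and the vertex of b equals 2 if there exists a coordinate i with a[i] = 1 and b[i] = 1, and equals 3 otherwise (i.e., when a · b = 0). -/
open SimpleGraph

abbrev OVVert (n d : ℕ) := (Fin n ⊕ Fin n) ⊕ (Fin d ⊕ Bool)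

/-- vertex for `a ∈ A` -/
abbrev OVVert.vA {n d : ℕ} (a : Fin n) : OVVert n d := Sum.inl (Sum.inl a)
/-- vertex for `b ∈ B` -/
abbrev OVVert.vB {n d : ℕ} (b : Fin n) : OVVert n d := Sum.inl (Sum.inr b)
/-- coordinate vertex `c_i` -/
abbrev OVVert.vC {n d : ℕ} (i : Fin d) : OVVert n d := Sum.inr (Sum.inl i)
/-- special vertex `x` -/
abbrev OVVert.vX {n d : ℕ} : OVVert n d := Sum.inr (Sum.inr false)
/-- special vertex `y` -/
abbrev OVVert.vY {n d : ℕ} : OVVert n d := Sum.inr (Sum.inr true)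

def ovRel (n d : ℕ) (A B : Fin n → Fin d → Bool) : OVVert n d → OVVert n d → Prop
  | Sum.inl (Sum.inl a), Sum.inr (Sum.inl i) => A a i = true
  | Sum.inl (Sum.inr b), Sum.inr (Sum.inl i) => B b i = true
  | Sum.inr (Sum.inr false), Sum.inl (Sum.inl _) => True
  | Sum.inr (Sum.inr true), Sum.inl (Sum.inr _) => True
  | Sum.inr (Sum.inr _), Sum.inr (Sum.inl _) => True
  | Sum.inr (Sum.inr false), Sum.inr (Sum.inr true) => True
  | _, _ => False

/-- The Roditty–Vassilevska-Williams OV-reduction graph. -/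
def ovGraph (n d : ℕ) (A B : Fin n → Fin d → Bool) : SimpleGraph (OVVert n d) :=
  SimpleGraph.fromRel (ovRel n d A B)

structure TreeDecomposition {V : Type} (G : SimpleGraph V) where
  ι : Type
  tree : SimpleGraph ι
  isTree : tree.IsTree
  bag : ι → Set V
  covers_vertex : ∀ v, ∃ t, v ∈ bag t
  covers_edge : ∀ ⦃u v⦄, G.Adj u v → ∃ t, u ∈ bag t ∧ v ∈ bag t
  bag_connected : ∀ v, (tree.induce {t | v ∈ bag t}).Connected

/-- The decomposition has width at most `w` (all bags of size at most `w+1`). -/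
def TreeDecomposition.widthLE {V : Type} {G : SimpleGraph V}
    (D : TreeDecomposition G) (w : ℕ) : Prop :=
  ∀ t, (D.bag t).ncard ≤ w + 1

/-- Treewidth: the least `w` such that some tree decomposition has width `w`. -/
noncomputable def treewidth {V : Type} (G : SimpleGraph V) : ℕ :=
  sInf {w | ∃ D : TreeDecomposition G, D.widthLE w}

section Aux
open OVVert
variable {n d : ℕ} {A B : Fin n → Fin d → Bool}

private lemma two_le_length {V : Type} {G : SimpleGraph V} {u v : V} (hne : u ≠ v)
    (hadj : ¬ G.Adj u v) (p : G.Walk u v) : 2 ≤ p.length := by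
  cases p with
  | nil => exact absurd rfl hne
  | cons h q =>
    cases q with
    | nil => exact absurd h hadj
    | cons h' q' => simp [SimpleGraph.Walk.length_cons]

private lemma adj_vA_vC {a : Fin n} {i : Fin d} (h : A a i = true) :
    (ovGraph n d A B).Adj (vA a) (vC i) := by
  rw [ovGraph, SimpleGraph.fromRel_adj]
  refine ⟨by simp, Or.inl ?_⟩
  simpa [ovRel]

private lemma adj_vB_vC {b : Fin n} {i : Fin d} (h : B b i = true) :
    (ovGraph n d A B).Adj (vB b) (vC i) := by
  rw [ovGraph, SimpleGraph.fromRel_adj]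
  refine ⟨by simp, Or.inl ?_⟩
  simpa [ovRel]

private lemma adj_vA_vX {a : Fin n} : (ovGraph n d A B).Adj (vA a) vX := by
  rw [ovGraph, SimpleGraph.fromRel_adj]
  exact ⟨by simp, Or.inr (by simp [ovRel])⟩

private lemma adj_vX_vY : (ovGraph n d A B).Adj (vX : OVVert n d) vY := by
  rw [ovGraph, SimpleGraph.fromRel_adj]
  exact ⟨by simp, Or.inl (by simp [ovRel])⟩

private lemma adj_vY_vB {b : Fin n} : (ovGraph n d A B).Adj vY (vB b) := by
  rw [ovGraph, SimpleGraph.fromRel_adj]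
  exact ⟨by simp, Or.inl (by simp [ovRel])⟩

private lemma not_adj_vA_vB {a b : Fin n} : ¬ (ovGraph n d A B).Adj (vA a) (vB b) := by
  rw [ovGraph, SimpleGraph.fromRel_adj]
  rintro ⟨-, h | h⟩ <;> simp [ovRel] at h

private lemma three_le_length {a b : Fin n}
    (hshared : ¬ ∃ i, A a i = true ∧ B b i = true)
    (p : (ovGraph n d A B).Walk (vA a) (vB b)) : 3 ≤ p.length := by
  cases p with
  | @cons _ w _ h q =>
    rw [ovGraph, SimpleGraph.fromRel_adj] at h
    obtain ⟨-, h⟩ := h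
    have key : 2 ≤ q.length := by
      obtain (a' | b') | (i | (_ | _)) := w
      · simp [ovRel] at h
      · simp [ovRel] at h
      · -- w = vC i
        have hA : A a i = true := by
          rcases h with h | h
          · simpa [ovRel] using h
          · simp [ovRel] at h
        refine two_le_length (by simp) ?_ q
        rw [ovGraph, SimpleGraph.fromRel_adj]
        rintro ⟨-, h' | h'⟩
        · simp [ovRel] at h'
        · have hB : B b i = true := by simpa [ovRel] using h'
          exact hshared ⟨i, hA, hB⟩
      · -- w = vX
        refine two_le_length (by simp) ?_ q
        rw [ovGraph, SimpleGraph.fromRel_adj]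
        rintro ⟨-, h' | h'⟩ <;> simp [ovRel] at h'
      · -- w = vY : not adjacent to vA
        rcases h with h | h <;> simp [ovRel] at h
    simpa [SimpleGraph.Walk.length_cons] using key

end Aux

open OVVert in
/-- In the OV-reduction graph, for `a ∈ A`, `b ∈ B` each with some coordinate 1,
`dist(a,b) = 2` if they share a 1-coordinate, and `3` otherwise (i.e. `a · b = 0`). -/
theorem ovGraph_dist_vA_vB (n d : ℕ) (hn : 1 ≤ n) (hd : 1 ≤ d)
    (A B : Fin n → Fin d → Bool) (a b : Fin n)
    (ha : ∃ i, A a i = true) (hb : ∃ i, B b i = true) :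
    (ovGraph n d A B).dist (vA a) (vB b) =
      if ∃ i, A a i = true ∧ B b i = true then 2 else 3 := by
  split_ifs with hc
  · obtain ⟨i, hA, hB⟩ := hc
    let p : (ovGraph n d A B).Walk (vA a) (vB b) :=
      .cons (adj_vA_vC hA) (.cons (adj_vB_vC hB).symm .nil)
    have hle : (ovGraph n d A B).dist (vA a) (vB b) ≤ 2 := by
      have := SimpleGraph.dist_le p
      simpa [p, SimpleGraph.Walk.length_cons] using this
    have hne : (vA a : OVVert n d) ≠ vB b := by simp
    have h0 : (ovGraph n d A B).dist (vA a) (vB b) ≠ 0 := by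
      rw [SimpleGraph.dist_ne_zero_iff_ne_and_reachable]
      exact ⟨hne, ⟨p⟩⟩
    have h1 : (ovGraph n d A B).dist (vA a) (vB b) ≠ 1 := by
      simp only [ne_eq, SimpleGraph.dist_eq_one_iff_adj]
      exact not_adj_vA_vB
    omega
  · let p : (ovGraph n d A B).Walk (vA a) (vB b) :=
      .cons adj_vA_vX (.cons adj_vX_vY (.cons adj_vY_vB .nil))
    have hle : (ovGraph n d A B).dist (vA a) (vB b) ≤ 3 := by
      have := SimpleGraph.dist_le p
      simpa [p, SimpleGraph.Walk.length_cons] using this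
    have hr : (ovGraph n d A B).Reachable (vA a) (vB b) := ⟨p⟩
    obtain ⟨q, hq⟩ := hr.exists_walk_length_eq_dist
    have := three_le_length hc q
    omega
end

section
/- Let n, d ≥ 1 and let G be the OV-reduction graph built from sets A, B of n Boolean vectors in {0,1}^d, where every vector in A ∪ B has at least one coordinate equal to 1. Then the diameter of G equals 3 if there exist a ∈ A and b ∈ B with a · b = 0, and equals 2 otherwise. -/
open SimpleGraph

/-!
The edge `x y` dominates the graph, so every distance is at most `1 + 1 + 1`. The neighbours
of `a ∈ A` are `x` and the coordinates where `a` is `1`, those of `b ∈ B` are `y` and the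
coordinates where `b` is `1`; hence `a` and `b` have a common neighbour exactly when `a · b ≠ 0`,
and they are never adjacent. If no pair is orthogonal, every other pair of vertices meets at `x`,
at `y` or at a shared coordinate, while `x` and `b` are at distance exactly `2`.
-/

namespace SimpleGraph

variable {V : Type*} {G : SimpleGraph V}

lemma edist_le_two_of_edist_le_one {u v w : V} (hu : G.edist u w ≤ 1) (hv : G.edist v w ≤ 1) :
    G.edist u v ≤ 2 :=
  calc G.edist u v ≤ G.edist u w + G.edist w v := G.edist_triangle
    _ ≤ 1 + 1 := add_le_add hu (G.edist_comm ▸ hv)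
    _ = 2 := one_add_one_eq_two

lemma ediam_le_three_of_dominating_adj {x y : V} (hxy : G.Adj x y)
    (hdom : ∀ u, G.edist u x ≤ 1 ∨ G.edist u y ≤ 1) : G.ediam ≤ 3 := by
  have hnear : ∀ u, ∃ h ∈ ({x, y} : Set V), G.edist u h ≤ 1 := fun u ↦ by
    rcases hdom u with hx | hy
    exacts [⟨x, .inl rfl, hx⟩, ⟨y, .inr rfl, hy⟩]
  have hhubs : ∀ h ∈ ({x, y} : Set V), ∀ h' ∈ ({x, y} : Set V), G.edist h h' ≤ 1 := by
    rintro _ (rfl | rfl) _ (rfl | rfl) <;>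
      simp [edist_le_one_iff_adj_or_eq, hxy, hxy.symm]
  refine ediam_le_of_edist_le fun u v ↦ ?_
  obtain ⟨h, hh, hu⟩ := hnear u
  obtain ⟨h', hh', hv⟩ := hnear v
  calc G.edist u v ≤ G.edist u h + (G.edist h h' + G.edist h' v) :=
        G.edist_triangle.trans (add_le_add_right G.edist_triangle _)
    _ ≤ 1 + (1 + 1) := add_le_add hu (add_le_add (hhubs h hh h' hh') (G.edist_comm ▸ hv))
    _ = 3 := by norm_num

lemma diam_eq_of_ediam_le_of_le_edist {k : ℕ} (hle : G.ediam ≤ k) {u v : V}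
    (hge : k ≤ G.edist u v) : G.diam = k := by
  rw [diam, le_antisymm hle (hge.trans edist_le_ediam), ENat.toNat_natCast]

end SimpleGraph

section OVGraph

open OVVert

variable {n d : ℕ} {A B : Fin n → Fin d → Bool}

lemma ovGraph_adj_vX_vY : (ovGraph n d A B).Adj vX vY := by
  simp [ovGraph, ovRel]

lemma ovGraph_edist_vA_vX_le_one (a : Fin n) : (ovGraph n d A B).edist (vA a) vX ≤ 1 := by
  simp [edist_le_one_iff_adj_or_eq, ovGraph, ovRel]

lemma ovGraph_edist_vB_vY_le_one (b : Fin n) : (ovGraph n d A B).edist (vB b) vY ≤ 1 := by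
  simp [edist_le_one_iff_adj_or_eq, ovGraph, ovRel]

lemma ovGraph_edist_inr_vX_le_one (w : Fin d ⊕ Bool) :
    (ovGraph n d A B).edist (Sum.inr w) vX ≤ 1 := by
  rcases w with i | (_ | _) <;> simp [edist_le_one_iff_adj_or_eq, ovGraph, ovRel]

lemma ovGraph_edist_inr_vY_le_one (w : Fin d ⊕ Bool) :
    (ovGraph n d A B).edist (Sum.inr w) vY ≤ 1 := by
  rcases w with i | (_ | _) <;> simp [edist_le_one_iff_adj_or_eq, ovGraph, ovRel]

lemma ovGraph_edist_vA_vC_le_one {a : Fin n} {i : Fin d} (h : A a i = true) :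
    (ovGraph n d A B).edist (vA a) (vC i) ≤ 1 := by
  simp [edist_le_one_iff_adj_or_eq, ovGraph, ovRel, h]

lemma ovGraph_edist_vB_vC_le_one {b : Fin n} {i : Fin d} (h : B b i = true) :
    (ovGraph n d A B).edist (vB b) (vC i) ≤ 1 := by
  simp [edist_le_one_iff_adj_or_eq, ovGraph, ovRel, h]

lemma ovGraph_edist_vX_le_one_or_edist_vY_le_one (u : OVVert n d) :
    (ovGraph n d A B).edist u vX ≤ 1 ∨ (ovGraph n d A B).edist u vY ≤ 1 := by
  rcases u with (a | b) | w
  exacts [.inl (ovGraph_edist_vA_vX_le_one a), .inr (ovGraph_edist_vB_vY_le_one b),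
    .inl (ovGraph_edist_inr_vX_le_one w)]

lemma ovGraph_edist_le_two (hAB : ∀ a b, ∃ i, A a i = true ∧ B b i = true)
    (u v : OVVert n d) : (ovGraph n d A B).edist u v ≤ 2 := by
  rcases u with (a | b) | w <;> rcases v with (a' | b') | w'
  · exact edist_le_two_of_edist_le_one
      (ovGraph_edist_vA_vX_le_one a) (ovGraph_edist_vA_vX_le_one a')
  · obtain ⟨i, ha, hb⟩ := hAB a b'
    exact edist_le_two_of_edist_le_one
      (ovGraph_edist_vA_vC_le_one ha) (ovGraph_edist_vB_vC_le_one hb)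
  · exact edist_le_two_of_edist_le_one
      (ovGraph_edist_vA_vX_le_one a) (ovGraph_edist_inr_vX_le_one w')
  · obtain ⟨i, ha, hb⟩ := hAB a' b
    exact edist_le_two_of_edist_le_one
      (ovGraph_edist_vB_vC_le_one hb) (ovGraph_edist_vA_vC_le_one ha)
  · exact edist_le_two_of_edist_le_one
      (ovGraph_edist_vB_vY_le_one b) (ovGraph_edist_vB_vY_le_one b')
  · exact edist_le_two_of_edist_le_one
      (ovGraph_edist_vB_vY_le_one b) (ovGraph_edist_inr_vY_le_one w')
  · exact edist_le_two_of_edist_le_one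
      (ovGraph_edist_inr_vX_le_one w) (ovGraph_edist_vA_vX_le_one a')
  · exact edist_le_two_of_edist_le_one
      (ovGraph_edist_inr_vY_le_one w) (ovGraph_edist_vB_vY_le_one b')
  · exact edist_le_two_of_edist_le_one
      (ovGraph_edist_inr_vX_le_one w) (ovGraph_edist_inr_vX_le_one w')

lemma ovGraph_two_lt_edist_of_orthogonal {a b : Fin n}
    (hab : ∀ i, ¬(A a i = true ∧ B b i = true)) :
    2 < (ovGraph n d A B).edist (vA a) (vB b) := by
  refine two_lt_edist_iff.mpr ⟨by simp, by simp [ovGraph, ovRel], ?_⟩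
  ext ((a' | b') | (i | (_ | _))) <;> simp [mem_commonNeighbors, ovGraph, ovRel]
  exact fun ha ↦ Bool.eq_false_iff.mpr fun hb ↦ hab i ⟨ha, hb⟩

lemma ovGraph_edist_vX_vB (b : Fin n) : (ovGraph n d A B).edist vX (vB b) = 2 :=
  edist_eq_two_iff.mpr ⟨by simp, by simp [ovGraph, ovRel],
    ⟨vY, by simp [mem_commonNeighbors, ovGraph, ovRel]⟩⟩

end OVGraph

theorem ovGraph_diam_general (n d : ℕ) (hn : 1 ≤ n)
    (A B : Fin n → Fin d → Bool) :
    (ovGraph n d A B).diam =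
      if ∃ a b, ∀ i, ¬(A a i = true ∧ B b i = true) then 3 else 2 := by
  split_ifs with horth
  · obtain ⟨a, b, hab⟩ := horth
    have hle : (ovGraph n d A B).ediam ≤ 3 :=
      ediam_le_three_of_dominating_adj ovGraph_adj_vX_vY
        ovGraph_edist_vX_le_one_or_edist_vY_le_one
    exact diam_eq_of_ediam_le_of_le_edist hle
      (Order.add_one_le_of_lt (ovGraph_two_lt_edist_of_orthogonal hab))
  · push Not at horth
    exact diam_eq_of_ediam_le_of_le_edist
      (ediam_le_of_edist_le (ovGraph_edist_le_two horth)) (ovGraph_edist_vX_vB ⟨0, hn⟩).ge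

/-- The diameter of the OV-reduction graph is 3 if there is an orthogonal pair,
and 2 otherwise, assuming every vector has at least one 1-coordinate. -/
theorem ovGraph_diam (n d : ℕ) (hn : 1 ≤ n) (hd : 1 ≤ d)
    (A B : Fin n → Fin d → Bool)
    (hA : ∀ a, ∃ i, A a i = true) (hB : ∀ b, ∃ i, B b i = true) :
    (ovGraph n d A B).diam =
      if ∃ a b, ∀ i, ¬(A a i = true ∧ B b i = true) then 3 else 2 :=
  ovGraph_diam_general n d hn A B
end

section
/- Let a, b : ℕ → ℝ be positive functions, let f : ℕ → ℝ with f(k) ≥ 1, and suppose: (i) for some δ > 0 a reduction from A to B runs in time a(n)^{1−δ} making queries of sizes n_1,…,n_q with Σ_i b(n_i)^{1−ε} ≤ c · a(n)^{1−δ} for some ε > 0 and c > 0; and (ii) B is solvable in time b(m)^{1−ε} · f(λ) on instances of size m and parameter value λ, where every query's parameter value λ satisfies f(λ) ≤ F for a uniform bound F ≥ 1. Then A is solvable in time at most a(n)^{1−δ} · (1 + c·F). -/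
/-- Closure of FPI under PFGR, at the level of time-bound arithmetic:
a reduction running in `a(n)^{1-δ}` whose queries of sizes `nᵢ` satisfy
`Σ b(nᵢ)^{1-ε} ≤ c·a(n)^{1-δ}`, combined with a solver for `B` of cost
`b(m)^{1-ε}·f(λ)` with a uniform bound `f(λᵢ) ≤ F`, yields total cost at most
`a(n)^{1-δ}·(1 + c·F)` for `A`. -/
theorem fpi_closure_arith (a b : ℕ → ℝ) (ha : ∀ n, 0 < a n) (hb : ∀ m, 0 < b m)
    (f : ℕ → ℝ) (hf : ∀ k, 1 ≤ f k)
    (δ ε c : ℝ) (hδ : 0 < δ) (hε : 0 < ε) (hc : 0 < c)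
    (n : ℕ) (q : ℕ) (ns : Fin q → ℕ) (lam : Fin q → ℕ)
    (F : ℝ) (hF : 1 ≤ F) (hfF : ∀ i, f (lam i) ≤ F)
    (hsum : ∑ i, b (ns i) ^ (1 - ε) ≤ c * a n ^ (1 - δ)) :
    a n ^ (1 - δ) + ∑ i, b (ns i) ^ (1 - ε) * f (lam i) ≤
      a n ^ (1 - δ) * (1 + c * F) := by
  have h1 : ∑ i, b (ns i) ^ (1 - ε) * f (lam i) ≤ (∑ i, b (ns i) ^ (1 - ε)) * F := by
    rw [Finset.sum_mul]
    refine Finset.sum_le_sum fun i _ => ?_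
    exact mul_le_mul_of_nonneg_left (hfF i) (Real.rpow_nonneg (hb _).le _)
  have h2 : (∑ i, b (ns i) ^ (1 - ε)) * F ≤ c * a n ^ (1 - δ) * F :=
    mul_le_mul_of_nonneg_right hsum (by linarith)
  nlinarith [Real.rpow_nonneg (ha n).le (1 - δ)]
end
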